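/- arXiv:2105.15056 — 2 statements merged into one kernel-verified Lean document; each statement's English description precedes it below -/
import Mathlib

section
/- Let θ₂ ∈ [0, π/2] and write c₂ = cos(θ₂), s₂ = sin(θ₂) (so that c₂ + 2s₂ > 0). Let p ∈ C¹([0,1]) with p > 0, let q ∈ C⁰([0,1]), q_c ∈ ℝ, and set q̃(x) = q(x) − q_c. Define a(x) = (2p(x) + 2x p′(x) − x² q̃(x)) / (c₂ + 2s₂) and b(x) = −x² / (c₂ + 2s₂). If φ ∈ C²([0,1]) satisfies −(p φ′)′ + q φ = λ φ on [0,1] and c₂ φ(1) + s₂ φ′(1) = 0, then ∫₀¹ a(x) φ(x) dx + (−λ + q_c) ∫₀¹ b(x) φ(x) dx = p(1) ( s₂ φ(1) − c₂ φ′(1) ). -/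
/-!
With `u = x²` one has `(p u')' = 2p + 2x p'`, so after using the eigenvalue equation
`(p φ')' = (q - λ) φ` the integrand `(cos θ₂ + 2 sin θ₂) (a + (q_c - λ) b) φ` is exactly
`φ (p u')' - u (p φ')'`. Green's formula turns its integral into the boundary term
`p (u' φ - u φ')` at `1` (both `u` and `u'` vanish at `0`), i.e. `p(1) (2 φ(1) - φ'(1))`, and
the Robin condition together with `sin² + cos² = 1` rewrites `2 φ(1) - φ'(1)` as
`(cos θ₂ + 2 sin θ₂) (sin θ₂ φ(1) - cos θ₂ φ'(1))`.
-/

open Real Set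

/-- One-sided/within derivative on the interval `[0,1]`. -/
noncomputable def dI (f : ℝ → ℝ) (x : ℝ) : ℝ := derivWithin f (Set.Icc 0 1) x

open intervalIntegral

noncomputable def flux (p φ : ℝ → ℝ) (x : ℝ) : ℝ := p x * dI φ x

noncomputable def lagrangeBracket (p u φ : ℝ → ℝ) (x : ℝ) : ℝ :=
  flux p u x * φ x - u x * flux p φ x

lemma cos_add_two_mul_sin_pos {θ : ℝ} (hθ : θ ∈ Icc 0 (π / 2)) :
    0 < cos θ + 2 * sin θ := by
  have hcos : 0 ≤ cos θ := cos_nonneg_of_mem_Icc ⟨by linarith [hθ.1, pi_pos], hθ.2⟩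
  have hsin : 0 ≤ sin θ := sin_nonneg_of_nonneg_of_le_pi hθ.1 (by linarith [hθ.2, pi_pos])
  nlinarith [sin_sq_add_cos_sq θ, cos_le_one θ, sin_le_one θ]

lemma hasDerivWithinAt_dI {f : ℝ → ℝ} {x : ℝ} (hf : DifferentiableOn ℝ f (Icc 0 1))
    (hx : x ∈ Icc (0 : ℝ) 1) : HasDerivWithinAt f (dI f x) (Icc 0 1) x :=
  (hf x hx).hasDerivWithinAt

lemma contDiffOn_flux {p φ : ℝ → ℝ} (hp : ContDiffOn ℝ 1 p (Icc 0 1))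
    (hφ : ContDiffOn ℝ 2 φ (Icc 0 1)) : ContDiffOn ℝ 1 (flux p φ) (Icc 0 1) :=
  hp.mul (hφ.derivWithin (uniqueDiffOn_Icc zero_lt_one) (by norm_num))

section Green

variable {p u φ : ℝ → ℝ}

lemma contDiffOn_lagrangeBracket (hp : ContDiffOn ℝ 1 p (Icc 0 1))
    (hu : ContDiffOn ℝ 2 u (Icc 0 1)) (hφ : ContDiffOn ℝ 2 φ (Icc 0 1)) :
    ContDiffOn ℝ 1 (lagrangeBracket p u φ) (Icc 0 1) :=
  ((contDiffOn_flux hp hu).mul (hφ.of_le (by norm_num))).sub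
    ((hu.of_le (by norm_num)).mul (contDiffOn_flux hp hφ))

lemma dI_lagrangeBracket (hp : ContDiffOn ℝ 1 p (Icc 0 1))
    (hu : ContDiffOn ℝ 2 u (Icc 0 1)) (hφ : ContDiffOn ℝ 2 φ (Icc 0 1))
    {x : ℝ} (hx : x ∈ Icc (0 : ℝ) 1) :
    dI (lagrangeBracket p u φ) x = φ x * dI (flux p u) x - u x * dI (flux p φ) x := by
  have hasDeriv : ∀ {f : ℝ → ℝ}, ContDiffOn ℝ 1 f (Icc 0 1) →
      HasDerivWithinAt f (dI f x) (Icc 0 1) x :=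
    fun hf => hasDerivWithinAt_dI (hf.differentiableOn one_ne_zero) hx
  have : HasDerivWithinAt (lagrangeBracket p u φ) _ (Icc 0 1) x :=
    ((hasDeriv (contDiffOn_flux hp hu)).mul (hasDeriv (hφ.of_le (by norm_num)))).sub
      ((hasDeriv (hu.of_le (by norm_num))).mul (hasDeriv (contDiffOn_flux hp hφ)))
  rw [dI, this.derivWithin (uniqueDiffOn_Icc zero_lt_one x hx)]
  simp only [flux]
  ring

theorem integral_green (hp : ContDiffOn ℝ 1 p (Icc 0 1))
    (hu : ContDiffOn ℝ 2 u (Icc 0 1)) (hφ : ContDiffOn ℝ 2 φ (Icc 0 1)) :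
    ∫ x in (0 : ℝ)..1, (φ x * dI (flux p u) x - u x * dI (flux p φ) x) =
      lagrangeBracket p u φ 1 - lagrangeBracket p u φ 0 := by
  rw [← integral_derivWithin_Icc_of_contDiffOn_Icc (contDiffOn_lagrangeBracket hp hu hφ)
    zero_le_one]
  refine integral_congr fun x hx => ?_
  rw [uIcc_of_le zero_le_one] at hx
  exact (dI_lagrangeBracket hp hu hφ hx).symm

end Green

lemma dI_sq {x : ℝ} (hx : x ∈ Icc (0 : ℝ) 1) : dI (· ^ 2) x = 2 * x := by
  rw [dI, ((hasDerivAt_pow 2 x).hasDerivWithinAt).derivWithin (uniqueDiffOn_Icc zero_lt_one x hx)]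
  norm_num

lemma dI_flux_sq {p : ℝ → ℝ} (hp : DifferentiableOn ℝ p (Icc 0 1)) {x : ℝ}
    (hx : x ∈ Icc (0 : ℝ) 1) : dI (flux p (· ^ 2)) x = 2 * p x + 2 * x * dI p x := by
  have hflux : EqOn (flux p (· ^ 2)) (fun y => p y * (2 * y)) (Icc 0 1) :=
    fun y hy => by rw [flux, dI_sq hy]
  have : HasDerivWithinAt (fun y => p y * (2 * y)) _ (Icc 0 1) x :=
    (hasDerivWithinAt_dI hp hx).mul ((hasDerivWithinAt_id x (Icc (0 : ℝ) 1)).const_mul 2)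
  rw [dI, derivWithin_congr hflux (hflux hx), this.derivWithin (uniqueDiffOn_Icc zero_lt_one x hx)]
  ring

/-- Green's formula with `u = x²`. -/
theorem integral_mul_sub_sq_mul_dI_flux {p φ : ℝ → ℝ} (hp : ContDiffOn ℝ 1 p (Icc 0 1))
    (hφ : ContDiffOn ℝ 2 φ (Icc 0 1)) :
    ∫ x in (0 : ℝ)..1, (φ x * (2 * p x + 2 * x * dI p x) - x ^ 2 * dI (flux p φ) x) =
      p 1 * (2 * φ 1 - dI φ 1) := by
  have hsq : ContDiffOn ℝ 2 (· ^ 2 : ℝ → ℝ) (Icc 0 1) := by fun_prop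
  have := integral_green hp hsq hφ
  rw [integral_congr fun x hx => by
    rw [dI_flux_sq (hp.differentiableOn one_ne_zero) (uIcc_of_le (zero_le_one' ℝ) ▸ hx)]]
    at this
  rw [this]
  simp only [lagrangeBracket, flux, dI_sq (left_mem_Icc.2 zero_le_one),
    dI_sq (right_mem_Icc.2 zero_le_one)]
  ring

theorem stmt_5_general (θ₂ : ℝ) (hθ₂ : θ₂ ∈ Set.Icc 0 (π/2))
    (p q qt : ℝ → ℝ) (q_c : ℝ)
    (hp : ContDiffOn ℝ 1 p (Set.Icc 0 1))
    (hq : ContinuousOn q (Set.Icc 0 1))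
    (hqt : ∀ x, qt x = q x - q_c)
    (a b : ℝ → ℝ)
    (ha : ∀ x, a x = (2 * p x + 2 * x * dI p x - x^2 * qt x) / (Real.cos θ₂ + 2 * Real.sin θ₂))
    (hb : ∀ x, b x = -x^2 / (Real.cos θ₂ + 2 * Real.sin θ₂))
    (lam : ℝ) (φ : ℝ → ℝ) (hφ : ContDiffOn ℝ 2 φ (Set.Icc 0 1))
    (heig : ∀ x ∈ Set.Icc (0:ℝ) 1,
      -(dI (fun y => p y * dI φ y) x) + q x * φ x = lam * φ x)
    (hbc1 : Real.cos θ₂ * φ 1 + Real.sin θ₂ * dI φ 1 = 0) :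
    (∫ x in (0:ℝ)..1, a x * φ x) + (-lam + q_c) * ∫ x in (0:ℝ)..1, b x * φ x
      = p 1 * (Real.sin θ₂ * φ 1 - Real.cos θ₂ * dI φ 1) := by
  obtain rfl : qt = fun x => q x - q_c := funext hqt
  obtain rfl : a = _ := funext ha
  obtain rfl : b = _ := funext hb
  beta_reduce
  set c := cos θ₂ + 2 * sin θ₂
  have hc : c ≠ 0 := (cos_add_two_mul_sin_pos hθ₂).ne'
  have hpc : ContinuousOn p (Icc 0 1) := hp.continuousOn
  have hφc : ContinuousOn φ (Icc 0 1) := hφ.continuousOn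
  have hdp : ContinuousOn (dI p) (Icc 0 1) :=
    hp.continuousOn_derivWithin (uniqueDiffOn_Icc zero_lt_one) le_rfl
  have hint : ∀ {f : ℝ → ℝ}, ContinuousOn f (Icc 0 1) →
      IntervalIntegrable f MeasureTheory.volume 0 1 :=
    fun hf => hf.intervalIntegrable_of_Icc zero_le_one
  have hpt : ∀ x ∈ uIcc (0 : ℝ) 1,
      (2 * p x + 2 * x * dI p x - x ^ 2 * (q x - q_c)) / c * φ x +
        (-lam + q_c) * (-x ^ 2 / c * φ x) =
      (φ x * (2 * p x + 2 * x * dI p x) - x ^ 2 * dI (flux p φ) x) / c := by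
    intro x hx
    have heig_x : -dI (flux p φ) x + q x * φ x = lam * φ x :=
      heig x (uIcc_of_le (zero_le_one' ℝ) ▸ hx)
    field_simp
    linear_combination (-x ^ 2) * heig_x
  rw [← integral_const_mul, ← integral_add (hint (by fun_prop)) (hint (by fun_prop)),
    integral_congr hpt, integral_div, integral_mul_sub_sq_mul_dI_flux hp hφ]
  field_simp
  linear_combination
    p 1 * ((2 * cos θ₂ - sin θ₂) * hbc1 + (dI φ 1 - 2 * φ 1) * sin_sq_add_cos_sq θ₂)

/-- The identity `⟨a, φ⟩ + (-λ + q_c) ⟨b, φ⟩ = p(1) (sin θ₂ φ(1) - cos θ₂ φ'(1))` for the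
input coefficients obtained when projecting the boundary-controlled reaction–diffusion PDE
onto a Sturm–Liouville eigenfunction `φ` with eigenvalue `λ`. -/
theorem stmt_5 (θ₂ : ℝ) (hθ₂ : θ₂ ∈ Set.Icc 0 (π/2))
    (p q qt : ℝ → ℝ) (q_c : ℝ)
    (hp : ContDiffOn ℝ 1 p (Set.Icc 0 1)) (hppos : ∀ x ∈ Set.Icc (0:ℝ) 1, 0 < p x)
    (hq : ContinuousOn q (Set.Icc 0 1))
    (hqt : ∀ x, qt x = q x - q_c)
    (a b : ℝ → ℝ)
    (ha : ∀ x, a x = (2 * p x + 2 * x * dI p x - x^2 * qt x) / (Real.cos θ₂ + 2 * Real.sin θ₂))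
    (hb : ∀ x, b x = -x^2 / (Real.cos θ₂ + 2 * Real.sin θ₂))
    (lam : ℝ) (φ : ℝ → ℝ) (hφ : ContDiffOn ℝ 2 φ (Set.Icc 0 1))
    (heig : ∀ x ∈ Set.Icc (0:ℝ) 1,
      -(dI (fun y => p y * dI φ y) x) + q x * φ x = lam * φ x)
    (hbc1 : Real.cos θ₂ * φ 1 + Real.sin θ₂ * dI φ 1 = 0) :
    (∫ x in (0:ℝ)..1, a x * φ x) + (-lam + q_c) * ∫ x in (0:ℝ)..1, b x * φ x
      = p 1 * (Real.sin θ₂ * φ 1 - Real.cos θ₂ * dI φ 1) :=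
  stmt_5_general θ₂ hθ₂ p q qt q_c hp hq hqt a b ha hb lam φ hφ heig hbc1
end

section
/- Let μ, η, h > 0 and c, β ∈ ℝ with μ > e^{ηh}|c|, and set ε := μ − e^{ηh}|c| > 0 and δ := min(η, ε/2). Let u : (0,∞) → ℝ be continuous and let z : [−h, ∞) → ℝ be continuous, differentiable on (0,∞), with ż(t) = −μ z(t) + c z(t−h) + β u(t) for all t > 0. Define 𝒱(t) = z(t)² + e^{ηh}|c| ∫_{t−h}^{t} e^{−2η(t−s)} z(s)² ds. Then for every t > 0: 𝒱′(t) ≤ −2δ 𝒱(t) + (β²/ε) u(t)². -/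
open Real Set

/-! Writing the delay integral as `e^{-2ηt} ∫_{t-h}^t e^{2ηs} z(s)² ds`, the fundamental theorem of
calculus gives `𝒱' = 2 z ż + e^{ηh}|c| (-2η W + z(t)² - e^{-2ηh} z(t-h)²)`, where `W` is the
integral. Young's inequality with weight `e^{ηh}` bounds the delayed cross term `2c z(t) z(t-h)` by
`|c| (e^{ηh} z(t)² + e^{-ηh} z(t-h)²)`, whose second part cancels the delayed term exactly, and
Young's inequality with weight `ε` bounds `2β z u`. What remains is
`-ε z(t)² - 2η e^{ηh}|c| W + (β²/ε) u²`, and `2δ ≤ ε`, `δ ≤ η`. -/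

theorem hasDerivAt_integral_sliding_window {g : ℝ → ℝ} {a h t : ℝ} (hg : ContinuousOn g (Ioi a))
    (ht : a < t) (hth : a < t - h) :
    HasDerivAt (fun τ => ∫ s in τ - h..τ, g s) (g t - g (t - h)) t := by
  have hint {x y : ℝ} (hx : a < x) (hy : a < y) : IntervalIntegrable g MeasureTheory.volume x y :=
    (hg.mono (ordConnected_Ioi.uIcc_subset hx hy)).intervalIntegrable
  have hderiv {b : ℝ} (hb : a < b) : HasDerivAt (fun τ => ∫ s in t - h..τ, g s) (g b) b :=
    intervalIntegral.integral_hasDerivAt_right (hint hth hb)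
      (hg.stronglyMeasurableAtFilter isOpen_Ioi b hb) (hg.continuousAt (Ioi_mem_nhds hb))
  have hshift := (hderiv hth).comp t ((hasDerivAt_id t).sub_const h)
  rw [mul_one] at hshift
  refine ((hderiv ht).sub hshift).congr_of_eventuallyEq ?_
  have hnear : ∀ᶠ τ in nhds t, a < τ - h :=
    (continuous_sub_right h).continuousAt.eventually (Ioi_mem_nhds hth)
  filter_upwards [Ioi_mem_nhds ht, hnear] with τ hτ hτh
  exact (intervalIntegral.integral_interval_sub_left (hint hth hτ) (hint hth hτh)).symm

theorem hasDerivAt_integral_exp_mul_sliding_window {g : ℝ → ℝ} {a h t : ℝ} (k : ℝ)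
    (hg : ContinuousOn g (Ioi a)) (ht : a < t) (hth : a < t - h) :
    HasDerivAt (fun τ => ∫ s in τ - h..τ, exp (k * (τ - s)) * g s)
      (k * (∫ s in t - h..t, exp (k * (t - s)) * g s) + g t - exp (k * h) * g (t - h)) t := by
  have hsplit (τ : ℝ) : ∫ s in τ - h..τ, exp (k * (τ - s)) * g s
      = exp (k * τ) * ∫ s in τ - h..τ, exp (-(k * s)) * g s := by
    rw [← intervalIntegral.integral_const_mul]
    congr 1 with s
    rw [← mul_assoc, ← exp_add, mul_sub, sub_eq_add_neg]
  have hexp : HasDerivAt (fun τ => exp (k * τ)) (k * exp (k * t)) t := by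
    simpa [mul_comm] using ((hasDerivAt_id t).const_mul k).exp
  have hcont : ContinuousOn (fun s => exp (-(k * s)) * g s) (Ioi a) :=
    (by fun_prop : Continuous fun s => exp (-(k * s))).continuousOn.mul hg
  have hwin := hasDerivAt_integral_sliding_window hcont ht hth
  have hcancel : exp (k * t) * exp (-(k * t)) = 1 := by rw [← exp_add, add_neg_cancel, exp_zero]
  have hdelay : exp (k * t) * exp (-(k * (t - h))) = exp (k * h) := by rw [← exp_add]; ring_nf
  rw [funext hsplit, hsplit t]
  refine (hexp.fun_mul hwin).congr_deriv ?_
  linear_combination g t * hcancel - g (t - h) * hdelay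

theorem lyapunov_dissipation_le {μ c β e ε δ η A B U W : ℝ} (he : 0 < e)
    (hε : ε = μ - e * |c|) (hε0 : 0 < ε) (hδη : δ ≤ η) (hδε : 2 * δ ≤ ε) (hW : 0 ≤ W) :
    2 * A * (-μ * A + c * B + β * U) + e * |c| * (-2 * η * W + A ^ 2 - e⁻¹ ^ 2 * B ^ 2)
      ≤ -2 * δ * (A ^ 2 + e * |c| * W) + β ^ 2 / ε * U ^ 2 := by
  have hcross : c * (2 * A * B) ≤ |c| * (e * A ^ 2 + e⁻¹ * B ^ 2) := calc
    c * (2 * A * B) ≤ |c| * (2 * |A| * |B|) := by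
      simpa only [abs_mul, abs_two] using le_abs_self (c * (2 * A * B))
    _ ≤ |c| * (e * A ^ 2 + e⁻¹ * B ^ 2) := by
      rw [← sq_abs A, ← sq_abs B]
      exact mul_le_mul_of_nonneg_left (two_mul_le_add_mul_sq he) (abs_nonneg c)
  have hforce : 2 * A * (β * U) ≤ ε * A ^ 2 + ε⁻¹ * (β * U) ^ 2 := two_mul_le_add_mul_sq hε0
  have hA : 2 * δ * A ^ 2 ≤ ε * A ^ 2 := mul_le_mul_of_nonneg_right hδε (sq_nonneg A)
  have hWterm : δ * (e * |c| * W) ≤ η * (e * |c| * W) :=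
    mul_le_mul_of_nonneg_right hδη (by positivity)
  have hinv : e * e⁻¹ ^ 2 = e⁻¹ := by field_simp
  rw [div_eq_inv_mul]
  linear_combination hcross + hforce + hA + 2 * hWterm - |c| * B ^ 2 * hinv + 2 * A ^ 2 * hε

theorem stmt_11_general (μ η h c β : ℝ) (hh : 0 < h)
    (hgap : Real.exp (η*h) * |c| < μ)
    (ε δ : ℝ) (hε : ε = μ - Real.exp (η*h) * |c|) (hδ : δ = min η (ε/2))
    (u : ℝ → ℝ)
    (z : ℝ → ℝ) (hz : ContinuousOn z (Set.Ici (-h)))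
    (hode : ∀ t > (0:ℝ), HasDerivAt z (-μ * z t + c * z (t-h) + β * u t) t)
    (V : ℝ → ℝ)
    (hV : ∀ t, V t = z t ^ 2
      + Real.exp (η*h) * |c| * ∫ s in t - h..t, Real.exp (-2*η*(t-s)) * z s ^ 2) :
    ∀ t > (0:ℝ), deriv V t ≤ -2*δ * V t + (β^2/ε) * u t ^ 2 := by
  intro t ht
  have hwin := hasDerivAt_integral_exp_mul_sliding_window (-2 * η) (g := fun s => z s ^ 2)
    ((hz.mono Ioi_subset_Ici_self).pow 2) (by linarith : -h < t) (by linarith : -h < t - h)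
  have hVderiv := ((hode t ht).fun_pow 2).fun_add (hwin.const_mul (exp (η * h) * |c|))
  rw [← funext hV] at hVderiv
  have hdecay : exp (-2 * η * h) = (exp (η * h))⁻¹ ^ 2 := by
    rw [← exp_neg, ← exp_nat_mul]
    ring_nf
  have hwin_nonneg : 0 ≤ ∫ s in t - h..t, exp (-2 * η * (t - s)) * z s ^ 2 :=
    intervalIntegral.integral_nonneg (by linarith) fun s _ => by positivity
  rw [hVderiv.deriv, hV t, hdecay]
  refine le_of_eq_of_le ?_ (lyapunov_dissipation_le (B := z (t - h)) (exp_pos (η * h)) hε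
    (by linarith) (hδ ▸ min_le_left _ _) (by rw [hδ]; linarith [min_le_right η (ε / 2)])
    hwin_nonneg)
  ring

/-- Per-mode Lyapunov–Krasovskii dissipation estimate for the scalar delay differential
equation `ż(t) = -μ z(t) + c z(t-h) + β u(t)` with `μ > e^{ηh}|c|`:
the functional `𝒱(t) = z(t)² + e^{ηh}|c| ∫_{t-h}^t e^{-2η(t-s)} z(s)² ds` satisfies
`𝒱'(t) ≤ -2δ 𝒱(t) + (β²/ε) u(t)²` with `ε = μ - e^{ηh}|c|` and `δ = min(η, ε/2)`. -/
theorem stmt_11 (μ η h c β : ℝ) (hμ : 0 < μ) (hη : 0 < η) (hh : 0 < h)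
    (hgap : Real.exp (η*h) * |c| < μ)
    (ε δ : ℝ) (hε : ε = μ - Real.exp (η*h) * |c|) (hδ : δ = min η (ε/2))
    (u : ℝ → ℝ) (hu : ContinuousOn u (Set.Ioi 0))
    (z : ℝ → ℝ) (hz : ContinuousOn z (Set.Ici (-h)))
    (hode : ∀ t > (0:ℝ), HasDerivAt z (-μ * z t + c * z (t-h) + β * u t) t)
    (V : ℝ → ℝ)
    (hV : ∀ t, V t = z t ^ 2
      + Real.exp (η*h) * |c| * ∫ s in t - h..t, Real.exp (-2*η*(t-s)) * z s ^ 2) :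
    ∀ t > (0:ℝ), deriv V t ≤ -2*δ * V t + (β^2/ε) * u t ^ 2 :=
  stmt_11_general μ η h c β hh hgap ε δ hε hδ u z hz hode V hV
end
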